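/- Let E₁, …, E₉ be the nine edges of the 18-ray Kochen–Specker hypergraph. For every w : {1,…,18} → [0,1] satisfying the normalization constraints Σ_{κ∈E_i} w_κ = 1 for each i ∈ {1,…,9}, one has (1/9) Σ_{i=1}^{9} max_{κ∈E_i} w_κ ≤ 5/6. Moreover this bound is attained, e.g. by the assignment w = (1,0,0,0,1,0,0,0,½,½,½,0,0,0,1,0,0,0) (entries listed in the order κ = 1,…,18). -/

import Mathlib

/-!
Call a vertex heavy if its weight exceeds `1/2`; an edge carries at most one heavy vertex.
Every vertex lies in two edges, so the number of edges carrying a heavy vertex is even, and as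
there are nine edges some edge `E j` is entirely light; its maximum is at most `1/2`. Any other
edge `E i` meets `E j` in at most one vertex `κ`, which is light, and then the maximum over `E i`
is at most `1 - w κ`. Each vertex of `E j` lies in exactly one other edge, so these eight bounds
add up to `8 - ∑_{κ ∈ E j} w κ = 7`.
-/

open scoped BigOperators

/-- The nine edges of the 18-ray Kochen–Specker hypergraph of Cabello et al.
(vertices `0,…,17` correspond to rays `1,…,18`). -/
def edges18 : Fin 9 → Finset (Fin 18) :=
  ![{0, 1, 2, 3}, {3, 4, 5, 6}, {6, 7, 8, 9}, {9, 10, 11, 12}, {12, 13, 14, 15},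
    {15, 16, 17, 0}, {17, 1, 8, 10}, {2, 4, 11, 13}, {5, 7, 14, 16}]

lemma edges18_nonempty (i : Fin 9) : (edges18 i).Nonempty := by
  fin_cases i <;> decide

/-- The optimal measurement-noncontextual assignment
`(1,0,0,0,1,0,0,0,½,½,½,0,0,0,1,0,0,0)`. -/
noncomputable def wOpt : Fin 18 → ℝ :=
  ![1, 0, 0, 0, 1, 0, 0, 0, 1/2, 1/2, 1/2, 0, 0, 0, 1, 0, 0, 0]

open Finset

theorem card_filter_half_lt_le_one {V : Type*} {s : Finset V} {w : V → ℝ}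
    (hw : ∀ v ∈ s, 0 ≤ w v) (hs : ∑ v ∈ s, w v = 1) : #{v ∈ s | 1 / 2 < w v} ≤ 1 := by
  refine card_le_one.2 fun a ha b hb => by_contra fun hab => ?_
  rw [mem_filter] at ha hb
  linarith [add_le_sum hw ha.1 hb.1 hab]

theorem sup'_le_one_sub_sum {V : Type*} [DecidableEq V] {s K : Finset V} (hne : s.Nonempty)
    {w : V → ℝ} (hw : ∀ v ∈ s, 0 ≤ w v) (hs : ∑ v ∈ s, w v = 1) (hKs : K ⊆ s) (hK : #K ≤ 1)
    (hKw : ∀ v ∈ K, w v ≤ 1 / 2) : s.sup' hne w ≤ 1 - ∑ v ∈ K, w v := by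
  refine sup'_le hne w fun a ha => ?_
  by_cases haK : a ∈ K
  · have hKa : K = {a} :=
      eq_singleton_iff_unique_mem.2 ⟨haK, fun b hb => card_le_one.1 hK b hb a haK⟩
    rw [hKa, sum_singleton]
    linarith [hKw a haK]
  · have h := sum_le_sum_of_subset_of_nonneg (insert_subset ha hKs) fun v hv _ => hw v hv
    rw [sum_insert haK] at h
    linarith

section RegularHypergraph

variable {ι V : Type*} [Fintype ι] [Fintype V] [DecidableEq V] (E : ι → Finset V)

theorem sum_sum_edges_eq_nsmul_sum {M : Type*} [AddCommMonoid M] {d : ℕ}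
    (hdeg : ∀ v, #{i | v ∈ E i} = d) (f : V → M) :
    ∑ i, ∑ v ∈ E i, f v = d • ∑ v, f v := by
  rw [sum_comm' (t' := univ) (s' := fun v => {i | v ∈ E i}) (by simp), smul_sum]
  exact sum_congr rfl fun v _ => by rw [sum_const, hdeg]

theorem exists_forall_mem_edge_not_of_odd (hdeg : ∀ v, #{i | v ∈ E i} = 2)
    (hodd : Odd (Fintype.card ι)) (p : V → Prop) [DecidablePred p]
    (hp : ∀ i, #{v ∈ E i | p v} ≤ 1) : ∃ j, ∀ v ∈ E j, ¬ p v := by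
  by_contra! h
  have hone : ∀ i, #{v ∈ E i | p v} = 1 := fun i =>
    (hp i).antisymm (card_pos.2 (let ⟨v, hv, hpv⟩ := h i; ⟨v, mem_filter.2 ⟨hv, hpv⟩⟩))
  have hcount := sum_sum_edges_eq_nsmul_sum E hdeg fun v => if p v then 1 else 0
  simp only [sum_boole, Nat.cast_id, hone, sum_const, card_univ, smul_eq_mul, mul_one] at hcount
  exact Nat.not_even_iff_odd.2 hodd ⟨_, hcount.trans (two_mul _)⟩

theorem sum_erase_sum_inter_eq [DecidableEq ι] (hdeg : ∀ v, #{i | v ∈ E i} = 2)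
    (w : V → ℝ) (j : ι) : ∑ i ∈ univ.erase j, ∑ v ∈ E i ∩ E j, w v = ∑ v ∈ E j, w v := by
  have h := sum_sum_edges_eq_nsmul_sum E hdeg fun v => if v ∈ E j then w v else 0
  simp only [sum_ite_mem, univ_inter] at h
  rw [← add_sum_erase _ _ (mem_univ j), inter_self, two_nsmul] at h
  exact add_left_cancel h

theorem sum_sup'_le_card_sub [DecidableEq ι] (hne : ∀ i, (E i).Nonempty)
    (hdeg : ∀ v, #{i | v ∈ E i} = 2) (hlin : ∀ i j, i ≠ j → #(E i ∩ E j) ≤ 1)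
    (hodd : Odd (Fintype.card ι)) {w : V → ℝ} (hw : ∀ v, 0 ≤ w v)
    (hs : ∀ i, ∑ v ∈ E i, w v = 1) :
    ∑ i, (E i).sup' (hne i) w ≤ Fintype.card ι - 3 / 2 := by
  obtain ⟨j, hj⟩ := exists_forall_mem_edge_not_of_odd E hdeg hodd (fun v => 1 / 2 < w v)
    fun i => card_filter_half_lt_le_one (fun v _ => hw v) (hs i)
  replace hj : ∀ v ∈ E j, w v ≤ 1 / 2 := fun v hv => not_lt.1 (hj v hv)
  have hmj : (E j).sup' (hne j) w ≤ 1 / 2 := sup'_le _ _ hj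
  have hmi : ∀ i ∈ univ.erase j, (E i).sup' (hne i) w ≤ 1 - ∑ v ∈ E i ∩ E j, w v :=
    fun i hi => sup'_le_one_sub_sum (hne i) (fun v _ => hw v) (hs i) inter_subset_left
      (hlin i j (ne_of_mem_erase hi)) fun v hv => hj v (mem_inter.1 hv).2
  calc ∑ i, (E i).sup' (hne i) w
      = (E j).sup' (hne j) w + ∑ i ∈ univ.erase j, (E i).sup' (hne i) w :=
        (add_sum_erase _ _ (mem_univ j)).symm
    _ ≤ 1 / 2 + ∑ i ∈ univ.erase j, (1 - ∑ v ∈ E i ∩ E j, w v) :=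
        add_le_add hmj (sum_le_sum hmi)
    _ = Fintype.card ι - 3 / 2 := by
        rw [sum_sub_distrib, sum_erase_sum_inter_eq E hdeg, hs j, sum_const,
          card_erase_of_mem (mem_univ j), card_univ, nsmul_one,
          Nat.cast_pred (Fintype.card_pos_iff.2 ⟨j⟩)]
        ring

end RegularHypergraph

lemma edges18_degree (v : Fin 18) : #{i | v ∈ edges18 i} = 2 := by
  revert v; decide

lemma card_edges18_inter_le_one : ∀ i j, i ≠ j → #(edges18 i ∩ edges18 j) ≤ 1 := by
  decide

/-- **The 5/6 bound on average max-predictability over the 18-ray hypergraph.** Every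
probabilistic assignment to the 18 vertices that is normalized on each of the nine edges has
average max-predictability at most `5/6`, and the bound is attained by `wOpt`. -/
theorem eighteen_ray_max_predictability_bound :
    (∀ w : Fin 18 → ℝ, (∀ κ, w κ ∈ Set.Icc (0 : ℝ) 1) →
      (∀ i, ∑ κ ∈ edges18 i, w κ = 1) →
      (1 / 9 : ℝ) * ∑ i, (edges18 i).sup' (edges18_nonempty i) w ≤ 5 / 6) ∧
    ((∀ κ, wOpt κ ∈ Set.Icc (0 : ℝ) 1) ∧ (∀ i, ∑ κ ∈ edges18 i, wOpt κ = 1) ∧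
      (1 / 9 : ℝ) * ∑ i, (edges18 i).sup' (edges18_nonempty i) wOpt = 5 / 6) := by
  refine ⟨fun w hw hs => ?_, fun κ => ?_, fun i => ?_, ?_⟩
  · have h := sum_sup'_le_card_sub edges18 edges18_nonempty edges18_degree
      card_edges18_inter_le_one (by decide) (fun v => (hw v).1) hs
    simp only [Fintype.card_fin, Nat.cast_ofNat] at h
    linarith
  · fin_cases κ <;> norm_num [wOpt]
  · fin_cases i <;> simp [edges18, wOpt] <;> norm_num
  · simp [Fin.sum_univ_succ, edges18, wOpt, sup'_insert]
    norm_num
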